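/- arXiv:2410.08457 — 2 statements merged into one kernel-verified Lean document; each statement's English description precedes it below -/
import Mathlib

section
/- Let H be a real inner product space, let η ≥ 0, G ≥ 0 be reals, let E ≥ 1 be a natural number, let w : ℕ → H be a sequence, and let q, τ be natural numbers with τ ≤ q. Suppose that for every round r with q − τ < r ≤ q there exist a finite index set N_r (a Finset over a type ι), weights γ_r : ι → ℝ with γ_r n ≥ 0 for n ∈ N_r and ∑_{n∈N_r} γ_r n = 1, and vectors g_{r,n,e} ∈ H for n ∈ N_r and 0 ≤ e < E with ‖g_{r,n,e}‖² ≤ G, such that w r − w (r−1) = −η • ∑_{n∈N_r} γ_r n • ∑_{e=0}^{E−1} g_{r,n,e}. Then ‖w q − w (q−τ)‖² ≤ τ² · η² · E² · G. -/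
/-!
Each round moves the model by at most `|η| E √G`: the `E` local steps have norm at most `√G`,
and a convex combination of vectors in a ball stays in that ball. The triangle inequality over the
at most `τ` rounds between `q - τ` and `q` then bounds the deviation by `τ |η| E √G`; square it.
-/

open Finset

theorem norm_sum_smul_le_of_convex {E ι : Type*} [SeminormedAddCommGroup E] [NormedSpace ℝ E]
    {s : Finset ι} {γ : ι → ℝ} {v : ι → E} {C : ℝ}
    (hγ₀ : ∀ i ∈ s, 0 ≤ γ i) (hγ₁ : ∑ i ∈ s, γ i = 1) (hv : ∀ i ∈ s, ‖v i‖ ≤ C) :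
    ‖∑ i ∈ s, γ i • v i‖ ≤ C := by
  simpa using (convex_closedBall (0 : E) C).sum_mem hγ₀ hγ₁ fun i hi ↦ by simpa using hv i hi

theorem norm_sum_range_le_mul {E : Type*} [SeminormedAddCommGroup E] {g : ℕ → E} {m : ℕ} {C : ℝ}
    (hg : ∀ e < m, ‖g e‖ ≤ C) : ‖∑ e ∈ range m, g e‖ ≤ m * C := by
  simpa using norm_sum_le_of_le (range m) fun e he ↦ hg e (mem_range.1 he)

theorem dist_le_mul_of_dist_pred_le {α : Type*} [PseudoMetricSpace α] {f : ℕ → α} {m n : ℕ}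
    {B : ℝ} (hmn : m ≤ n) (hf : ∀ r, m < r → r ≤ n → dist (f r) (f (r - 1)) ≤ B) :
    dist (f n) (f m) ≤ (n - m : ℕ) * B := by
  rw [dist_comm]
  simpa using dist_le_Ico_sum_of_dist_le hmn (d := fun _ ↦ B) fun {k} hk hkn ↦ by
    simpa [dist_comm] using hf (k + 1) (by omega) (by omega)

theorem norm_update_le {H ι : Type*} [SeminormedAddCommGroup H] [NormedSpace ℝ H]
    {η G : ℝ} {E : ℕ} {N : Finset ι} {γ : ι → ℝ} {g : ι → ℕ → H}
    (hγ₀ : ∀ n ∈ N, 0 ≤ γ n) (hγ₁ : ∑ n ∈ N, γ n = 1) (hg : ∀ n ∈ N, ∀ e < E, ‖g n e‖ ^ 2 ≤ G) :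
    ‖-η • ∑ n ∈ N, γ n • ∑ e ∈ range E, g n e‖ ≤ |η| * (E * √G) := by
  rw [norm_smul, norm_neg, Real.norm_eq_abs]
  gcongr
  exact norm_sum_smul_le_of_convex hγ₀ hγ₁ fun n hn ↦
    norm_sum_range_le_mul fun e he ↦ Real.le_sqrt_of_sq_le (hg n hn e he)

theorem staleness_deviation_bound_general {H : Type*} [NormedAddCommGroup H]
    [InnerProductSpace ℝ H] {ι : Type*}
    (η G : ℝ) (hG : 0 ≤ G) (E : ℕ)
    (w : ℕ → H) (q τ : ℕ)
    (hupd : ∀ r, q - τ < r → r ≤ q →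
      ∃ (N : Finset ι) (γ : ι → ℝ) (g : ι → ℕ → H),
        (∀ n ∈ N, 0 ≤ γ n) ∧ (∑ n ∈ N, γ n = 1) ∧
        (∀ n ∈ N, ∀ e < E, ‖g n e‖ ^ 2 ≤ G) ∧
        w r - w (r - 1) = -η • ∑ n ∈ N, γ n • ∑ e ∈ Finset.range E, g n e) :
    ‖w q - w (q - τ)‖ ^ 2 ≤ (τ : ℝ) ^ 2 * η ^ 2 * (E : ℝ) ^ 2 * G := by
  set B := |η| * (E * √G)
  have hstep : ∀ r, q - τ < r → r ≤ q → dist (w r) (w (r - 1)) ≤ B := fun r h₁ h₂ ↦ by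
    obtain ⟨N, γ, g, hγ₀, hγ₁, hg, hw⟩ := hupd r h₁ h₂
    rw [dist_eq_norm, hw]
    exact norm_update_le hγ₀ hγ₁ hg
  have hrounds : ((q - (q - τ) : ℕ) : ℝ) ≤ τ := by norm_cast; omega
  have hdev : ‖w q - w (q - τ)‖ ≤ τ * B := by
    rw [← dist_eq_norm]
    exact (dist_le_mul_of_dist_pred_le (Nat.sub_le q τ) hstep).trans
      (mul_le_mul_of_nonneg_right hrounds (by positivity))
  calc ‖w q - w (q - τ)‖ ^ 2 ≤ (τ * B) ^ 2 := pow_le_pow_left₀ (norm_nonneg _) hdev 2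
    _ = (τ : ℝ) ^ 2 * η ^ 2 * (E : ℝ) ^ 2 * G := by
      rw [mul_pow, mul_pow, mul_pow, sq_abs, Real.sq_sqrt hG]; ring

/-- Deterministic form of the key staleness lemma: if each round's update between
rounds `q - τ` and `q` is `−η` times a convex combination of sums of `E` bounded
local gradient steps, then `‖w q − w (q − τ)‖² ≤ τ² * η² * E² * G`. -/
theorem staleness_deviation_bound {H : Type*} [NormedAddCommGroup H]
    [InnerProductSpace ℝ H] {ι : Type*}
    (η G : ℝ) (hη : 0 ≤ η) (hG : 0 ≤ G) (E : ℕ) (hE : 1 ≤ E)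
    (w : ℕ → H) (q τ : ℕ) (hτq : τ ≤ q)
    (hupd : ∀ r, q - τ < r → r ≤ q →
      ∃ (N : Finset ι) (γ : ι → ℝ) (g : ι → ℕ → H),
        (∀ n ∈ N, 0 ≤ γ n) ∧ (∑ n ∈ N, γ n = 1) ∧
        (∀ n ∈ N, ∀ e < E, ‖g n e‖ ^ 2 ≤ G) ∧
        w r - w (r - 1) = -η • ∑ n ∈ N, γ n • ∑ e ∈ Finset.range E, g n e) :
    ‖w q - w (q - τ)‖ ^ 2 ≤ (τ : ℝ) ^ 2 * η ^ 2 * (E : ℝ) ^ 2 * G :=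
  staleness_deviation_bound_general η G hG E w q τ hupd
end

section
/- Let d and E be natural numbers with E ≥ 1, and let η ≥ 0, L > 0, σ ≥ 0, δ ≥ 0, G ≥ 0 be reals with 4η²L²E² ≤ 1/2. Let (Ω, μ) be a probability space and write H = EuclideanSpace ℝ (Fin d). Let m : Fin d → ℝ be a binary mask (m i ∈ {0,1} for every i). Let F_n : H → ℝ be differentiable with gradient ∇F_n satisfying ‖∇F_n w − ∇F_n v‖ ≤ L‖w − v‖ for all w, v, and let F : H → ℝ be differentiable with ‖∇F_n w − ∇F w‖ ≤ δ for all w. Fix w₀ ∈ H with ‖∇F w₀‖² ≤ G. Let W : ℕ → Ω → H and G' : ℕ → Ω → H be strongly measurable with: (i) W 0 = w₀ almost everywhere; (ii) for every j < E, W (j+1) = W j − η • (m ⊙ G' j) almost everywhere; (iii) ∫ ‖G' j − ∇F_n (W j)‖² dμ ≤ σ² for every j < E; (iv) the masked noises ζ_j := m ⊙ (G' j − ∇F_n (W j)) are pairwise orthogonal in L², i.e. ∫ ⟪ζ_i, ζ_j⟫ dμ = 0 for all i ≠ j with i, j < E; (v) ‖W j‖² and ‖G' j‖² are μ-integrable for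 every j ≤ E. Then (1/E) · ∑_{e=1}^{E} ∫ ‖W (e−1) − w₀‖² dμ ≤ 4η²Eσ² + 16η²E²δ² + 16η²E²G. -/
/-!
Unrolling the recursion gives `W j - w₀ = -η ∑_{k<j} m ⊙ G'_k`. Each masked stochastic gradient
splits as the noise `m ⊙ (G'_k - ∇Fₙ(W_k))`, the drift `m ⊙ (∇Fₙ(W_k) - ∇Fₙ(w₀))` and
`m ⊙ ∇Fₙ(w₀)`. The mask is a contraction, so in `L²` the orthogonal noise sum costs at most `j σ²`,
smoothness bounds the drift sum by `j L² ∑_{k<j} ‖W_k - w₀‖²`, and `‖∇Fₙ(w₀)‖² ≤ 2δ² + 2G`.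
Hence `S_j = 𝔼‖W_j - w₀‖²` satisfies `S_j ≤ A + 4η²L²E ∑_{k<j} S_k` for `j < E`, with
`A = 2η²Eσ² + 8η²E²(δ² + G)`. Summing, `T = ∑_{j<E} S_j ≤ E A + 4η²L²E² T`, and the step-size
condition absorbs the last term: `T ≤ 2 E A`.
-/

open MeasureTheory

/-- The Hadamard (coordinatewise) product of a mask `m : Fin d → ℝ` with a vector
`x ∈ EuclideanSpace ℝ (Fin d)`. -/
def hadamard {d : ℕ} (m : Fin d → ℝ) (x : EuclideanSpace ℝ (Fin d)) :
    EuclideanSpace ℝ (Fin d) :=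
  WithLp.toLp 2 (fun i => m i * x i)

open Finset

section Hadamard

variable {d : ℕ} (m : Fin d → ℝ)

lemma hadamard_sub (x y : EuclideanSpace ℝ (Fin d)) :
    hadamard m (x - y) = hadamard m x - hadamard m y := by
  ext i
  simp [hadamard, mul_sub]

lemma hadamard_zero : hadamard m 0 = 0 := by
  simpa using hadamard_sub m 0 0

variable {m}

lemma norm_hadamard_le (hm : ∀ i, |m i| ≤ 1) (x : EuclideanSpace ℝ (Fin d)) :
    ‖hadamard m x‖ ≤ ‖x‖ := by
  rw [EuclideanSpace.norm_eq, EuclideanSpace.norm_eq]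
  gcongr with i
  simpa [hadamard, abs_mul] using mul_le_of_le_one_left (abs_nonneg (x i)) (hm i)

lemma lipschitzWith_hadamard (hm : ∀ i, |m i| ≤ 1) : LipschitzWith 1 (hadamard m) :=
  LipschitzWith.of_dist_le_mul fun x y => by
    simpa [dist_eq_norm, ← hadamard_sub] using norm_hadamard_le hm (x - y)

end Hadamard

section NormSq

variable {ι V : Type*} [SeminormedAddCommGroup V]

lemma norm_add_sq_le_two_mul (a b : V) : ‖a + b‖ ^ 2 ≤ 2 * (‖a‖ ^ 2 + ‖b‖ ^ 2) :=
  (pow_le_pow_left₀ (norm_nonneg _) (norm_add_le a b) 2).trans add_sq_le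

lemma norm_sq_le_two_mul_norm_sub_sq_add (a b : V) : ‖a‖ ^ 2 ≤ 2 * (‖a - b‖ ^ 2 + ‖b‖ ^ 2) := by
  simpa using norm_add_sq_le_two_mul (a - b) b

lemma norm_sum_sq_le_card_mul (s : Finset ι) (f : ι → V) :
    ‖∑ i ∈ s, f i‖ ^ 2 ≤ #s * ∑ i ∈ s, ‖f i‖ ^ 2 :=
  (pow_le_pow_left₀ (norm_nonneg _) (norm_sum_le s f) 2).trans sq_sum_le_card_mul_sum_sq

end NormSq

lemma norm_sum_hadamard_sq_le {d : ℕ} {m : Fin d → ℝ} (hm : ∀ i, |m i| ≤ 1)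
    {φ : EuclideanSpace ℝ (Fin d) → EuclideanSpace ℝ (Fin d)} {L : ℝ}
    (hφ : ∀ w v, ‖φ w - φ v‖ ≤ L * ‖w - v‖) {ι : Type*} (s : Finset ι)
    (g w : ι → EuclideanSpace ℝ (Fin d)) (w₀ : EuclideanSpace ℝ (Fin d)) :
    ‖∑ k ∈ s, hadamard m (g k)‖ ^ 2 ≤
      2 * ‖∑ k ∈ s, hadamard m (g k - φ (w k))‖ ^ 2
        + 4 * #s * L ^ 2 * ∑ k ∈ s, ‖w k - w₀‖ ^ 2 + 4 * #s ^ 2 * ‖φ w₀‖ ^ 2 := by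
  set Z := ∑ k ∈ s, hadamard m (g k - φ (w k))
  set C := ∑ k ∈ s, hadamard m (φ (w k) - φ w₀)
  set b := hadamard m (φ w₀)
  have hsplit : ∑ k ∈ s, hadamard m (g k) = Z + (C + #s • b) := by
    rw [← sum_const, ← sum_add_distrib, ← sum_add_distrib]
    refine sum_congr rfl fun k _ => ?_
    rw [hadamard_sub, hadamard_sub]
    abel
  have hC : ‖C‖ ^ 2 ≤ #s * (L ^ 2 * ∑ k ∈ s, ‖w k - w₀‖ ^ 2) := by
    rw [mul_sum]
    refine (norm_sum_sq_le_card_mul s _).trans ?_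
    gcongr with k
    calc ‖hadamard m (φ (w k) - φ w₀)‖ ^ 2 ≤ ‖φ (w k) - φ w₀‖ ^ 2 := by
          gcongr; exact norm_hadamard_le hm _
      _ ≤ (L * ‖w k - w₀‖) ^ 2 := by gcongr; exact hφ _ _
      _ = L ^ 2 * ‖w k - w₀‖ ^ 2 := mul_pow _ _ _
  have hb : ‖#s • b‖ ^ 2 ≤ #s ^ 2 * ‖φ w₀‖ ^ 2 :=
    calc ‖#s • b‖ ^ 2 ≤ (#s * ‖φ w₀‖) ^ 2 := by
          gcongr
          exact norm_nsmul_le.trans (by gcongr; exact norm_hadamard_le hm _)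
      _ = _ := mul_pow _ _ _
  calc ‖∑ k ∈ s, hadamard m (g k)‖ ^ 2 ≤ 2 * (‖Z‖ ^ 2 + 2 * (‖C‖ ^ 2 + ‖#s • b‖ ^ 2)) := by
        rw [hsplit]
        refine (norm_add_sq_le_two_mul _ _).trans ?_
        gcongr
        exact norm_add_sq_le_two_mul _ _
    _ ≤ _ := by linarith

lemma sum_range_le_two_mul_of_le_add_mul_sum {S : ℕ → ℝ} {n : ℕ} {A B : ℝ}
    (hS : ∀ j < n, 0 ≤ S j) (hB : 0 ≤ B) (hnB : n * B ≤ 1 / 2)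
    (hrec : ∀ j < n, S j ≤ A + B * ∑ k ∈ range j, S k) :
    ∑ k ∈ range n, S k ≤ 2 * n * A := by
  set T := ∑ k ∈ range n, S k
  have hT : 0 ≤ T := sum_nonneg fun k hk => hS k (mem_range.1 hk)
  have hpartial : ∀ j < n, ∑ k ∈ range j, S k ≤ T := fun j hj =>
    sum_le_sum_of_subset_of_nonneg (range_subset_range.2 hj.le)
      fun k hk _ => hS k (mem_range.1 hk)
  have hTle : T ≤ n * (A + B * T) :=
    calc T ≤ ∑ _j ∈ range n, (A + B * T) :=
          sum_le_sum fun j hj => (hrec j (mem_range.1 hj)).trans <| by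
            gcongr; exact hpartial j (mem_range.1 hj)
      _ = n * (A + B * T) := by simp [mul_add]
  nlinarith [mul_le_mul_of_nonneg_right hnB hT]

section Probability

variable {Ω : Type*} [MeasurableSpace Ω] {μ : Measure Ω}

lemma ae_eq_sub_smul_sum_range {R V : Type*} [Ring R] [AddCommGroup V] [Module R V]
    {X D : ℕ → Ω → V} {x₀ : V} {η : R} {n : ℕ} (h0 : X 0 =ᵐ[μ] fun _ => x₀)
    (hstep : ∀ j < n, X (j + 1) =ᵐ[μ] fun ω => X j ω - η • D j ω) :
    ∀ j ≤ n, X j =ᵐ[μ] fun ω => x₀ - η • ∑ k ∈ range j, D k ω := by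
  intro j
  induction j with
  | zero => simpa using h0
  | succ j ih =>
    intro hj
    filter_upwards [hstep j hj, ih (Nat.le_of_succ_le hj)] with ω hstepω hjω
    rw [hstepω, hjω, sum_range_succ, smul_add, sub_sub]

lemma LipschitzWith.comp_memLp_of_isFiniteMeasure [IsFiniteMeasure μ] {E F : Type*}
    [NormedAddCommGroup E] [NormedAddCommGroup F] {p : ENNReal} {K : NNReal} {g : E → F}
    (hg : LipschitzWith K g) {f : Ω → E} (hf : MemLp f p μ) :
    MemLp (fun ω => g (f ω)) p μ := by
  refine ((hf.norm.const_mul K).add (memLp_const ‖g 0‖)).of_le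
    (hg.continuous.comp_aestronglyMeasurable hf.1) (ae_of_all _ fun ω => ?_)
  calc ‖g (f ω)‖ ≤ ‖g (f ω) - g 0‖ + ‖g 0‖ := norm_le_norm_sub_add _ _
    _ ≤ K * ‖f ω‖ + ‖g 0‖ := by simpa using hg.norm_sub_le (f ω) 0
    _ ≤ ‖K * ‖f ω‖ + ‖g 0‖‖ := Real.le_norm_self _

lemma MeasureTheory.MemLp.hadamard {d : ℕ} {m : Fin d → ℝ} (hm : ∀ i, |m i| ≤ 1)
    {p : ENNReal} {D : Ω → EuclideanSpace ℝ (Fin d)} (hD : MemLp D p μ) :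
    MemLp (fun ω => _root_.hadamard m (D ω)) p μ :=
  (lipschitzWith_hadamard hm).comp_memLp (hadamard_zero m) hD

variable {E : Type*} [NormedAddCommGroup E] [InnerProductSpace ℝ E]

lemma MeasureTheory.MemLp.integrable_inner {f g : Ω → E} (hf : MemLp f 2 μ) (hg : MemLp g 2 μ) :
    Integrable (fun ω => inner ℝ (f ω) (g ω)) μ :=
  (L2.integrable_inner (𝕜 := ℝ) (hf.toLp f) (hg.toLp g)).congr <| by
    filter_upwards [hf.coeFn_toLp, hg.coeFn_toLp] with ω hfω hgω
    rw [hfω, hgω]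

lemma integral_norm_sum_sq_of_orthogonal {ι : Type*} (s : Finset ι) {ζ : ι → Ω → E}
    (hζ : ∀ i ∈ s, MemLp (ζ i) 2 μ)
    (horth : ∀ i ∈ s, ∀ j ∈ s, i ≠ j → ∫ ω, inner ℝ (ζ i ω) (ζ j ω) ∂μ = 0) :
    ∫ ω, ‖∑ i ∈ s, ζ i ω‖ ^ 2 ∂μ = ∑ i ∈ s, ∫ ω, ‖ζ i ω‖ ^ 2 ∂μ := by
  have hint : ∀ i ∈ s, ∀ j ∈ s, Integrable (fun ω => inner ℝ (ζ i ω) (ζ j ω)) μ :=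
    fun i hi j hj => (hζ i hi).integrable_inner (hζ j hj)
  calc ∫ ω, ‖∑ i ∈ s, ζ i ω‖ ^ 2 ∂μ
      = ∫ ω, ∑ i ∈ s, ∑ j ∈ s, inner ℝ (ζ i ω) (ζ j ω) ∂μ := by
        simp_rw [← real_inner_self_eq_norm_sq, sum_inner, inner_sum]
    _ = ∑ i ∈ s, ∑ j ∈ s, ∫ ω, inner ℝ (ζ i ω) (ζ j ω) ∂μ := by
        rw [integral_finsetSum _ fun i hi => integrable_finsetSum _ (hint i hi)]
        exact sum_congr rfl fun i hi => integral_finsetSum _ (hint i hi)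
    _ = ∑ i ∈ s, ∫ ω, ‖ζ i ω‖ ^ 2 ∂μ := by
        refine sum_congr rfl fun i hi => ?_
        rw [sum_eq_single_of_mem i hi fun j hj hji => horth i hi j hj hji.symm]
        simp_rw [real_inner_self_eq_norm_sq]

lemma integral_norm_sum_sq_le_of_orthogonal {ι : Type*} (s : Finset ι) {ζ : ι → Ω → E} {c : ℝ}
    (hζ : ∀ i ∈ s, MemLp (ζ i) 2 μ)
    (horth : ∀ i ∈ s, ∀ j ∈ s, i ≠ j → ∫ ω, inner ℝ (ζ i ω) (ζ j ω) ∂μ = 0)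
    (hc : ∀ i ∈ s, ∫ ω, ‖ζ i ω‖ ^ 2 ∂μ ≤ c) :
    ∫ ω, ‖∑ i ∈ s, ζ i ω‖ ^ 2 ∂μ ≤ #s * c := by
  rw [integral_norm_sum_sq_of_orthogonal s hζ horth]
  simpa using sum_le_sum hc

lemma integral_norm_sq_hadamard_le [IsFiniteMeasure μ] {d : ℕ} {m : Fin d → ℝ}
    (hm : ∀ i, |m i| ≤ 1) {D : Ω → EuclideanSpace ℝ (Fin d)} (hD : MemLp D 2 μ) :
    ∫ ω, ‖hadamard m (D ω)‖ ^ 2 ∂μ ≤ ∫ ω, ‖D ω‖ ^ 2 ∂μ :=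
  integral_mono (hD.hadamard hm).integrable_norm_pow' hD.integrable_norm_pow'
    fun ω => by gcongr; exact norm_hadamard_le hm _

lemma integral_norm_sq_sub_le_of_ae_eq_sum_hadamard [IsProbabilityMeasure μ] {d : ℕ}
    {m : Fin d → ℝ} (hm : ∀ i, |m i| ≤ 1)
    {φ : EuclideanSpace ℝ (Fin d) → EuclideanSpace ℝ (Fin d)} {L : ℝ}
    (hφ : ∀ w v, ‖φ w - φ v‖ ≤ L * ‖w - v‖) {W G' : ℕ → Ω → EuclideanSpace ℝ (Fin d)}
    {w₀ : EuclideanSpace ℝ (Fin d)} {η : ℝ} {j : ℕ}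
    (hiter : W j =ᵐ[μ] fun ω => w₀ - η • ∑ k ∈ range j, hadamard m (G' k ω))
    (hζ : ∀ k < j, MemLp (fun ω => hadamard m (G' k ω - φ (W k ω))) 2 μ)
    (hW : ∀ k < j, MemLp (W k) 2 μ) :
    ∫ ω, ‖W j ω - w₀‖ ^ 2 ∂μ ≤
      2 * η ^ 2 * ∫ ω, ‖∑ k ∈ range j, hadamard m (G' k ω - φ (W k ω))‖ ^ 2 ∂μ
        + 4 * η ^ 2 * j * L ^ 2 * ∑ k ∈ range j, ∫ ω, ‖W k ω - w₀‖ ^ 2 ∂μ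
        + 4 * η ^ 2 * j ^ 2 * ‖φ w₀‖ ^ 2 := by
  have hZ : Integrable (fun ω => ‖∑ k ∈ range j, hadamard m (G' k ω - φ (W k ω))‖ ^ 2) μ :=
    (memLp_finsetSum _ fun k hk => hζ k (mem_range.1 hk)).integrable_norm_pow'
  have hdev : ∀ k ∈ range j, Integrable (fun ω => ‖W k ω - w₀‖ ^ 2) μ :=
    fun k hk => ((hW k (mem_range.1 hk)).sub (memLp_const w₀)).integrable_norm_pow'
  have hsum : Integrable (fun ω => ∑ k ∈ range j, ‖W k ω - w₀‖ ^ 2) μ :=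
    integrable_finsetSum _ hdev
  calc ∫ ω, ‖W j ω - w₀‖ ^ 2 ∂μ
      ≤ ∫ ω, (2 * η ^ 2 * ‖∑ k ∈ range j, hadamard m (G' k ω - φ (W k ω))‖ ^ 2
          + 4 * η ^ 2 * j * L ^ 2 * ∑ k ∈ range j, ‖W k ω - w₀‖ ^ 2
          + 4 * η ^ 2 * j ^ 2 * ‖φ w₀‖ ^ 2) ∂μ := by
        refine integral_mono_of_nonneg (ae_of_all _ fun ω => by positivity)
          (((hZ.const_mul _).add (hsum.const_mul _)).add (integrable_const _)) ?_
        filter_upwards [hiter] with ω hω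
        have hpt := mul_le_mul_of_nonneg_left
          (norm_sum_hadamard_sq_le hm hφ (range j) (G' · ω) (W · ω) w₀) (sq_nonneg η)
        rw [hω, sub_sub_cancel_left, norm_neg, norm_smul, mul_pow, Real.norm_eq_abs, sq_abs]
        rw [card_range] at hpt
        linarith
    _ = _ := by
        rw [integral_add, integral_add, integral_const_mul, integral_const_mul,
          integral_finsetSum _ hdev]
        · simp
        exacts [hZ.const_mul _, hsum.const_mul _, (hZ.const_mul _).add (hsum.const_mul _),
          integrable_const _]

end Probability

theorem bounded_client_update_general
    (d E : ℕ) (η L σ δ G : ℝ)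
    (hstep : 4 * η ^ 2 * L ^ 2 * (E : ℝ) ^ 2 ≤ 1 / 2)
    {Ω : Type*} [MeasurableSpace Ω] (μ : Measure Ω) [IsProbabilityMeasure μ]
    (m : Fin d → ℝ) (hm : ∀ i, m i = 0 ∨ m i = 1)
    (Fn F : EuclideanSpace ℝ (Fin d) → ℝ)
    (hlip : ∀ w v, ‖gradient Fn w - gradient Fn v‖ ≤ L * ‖w - v‖)
    (hhet : ∀ w, ‖gradient Fn w - gradient F w‖ ≤ δ)
    (w₀ : EuclideanSpace ℝ (Fin d)) (hw₀ : ‖gradient F w₀‖ ^ 2 ≤ G)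
    (W G' : ℕ → Ω → EuclideanSpace ℝ (Fin d))
    (hWmeas : ∀ j, StronglyMeasurable (W j))
    (hGmeas : ∀ j, StronglyMeasurable (G' j))
    (hW0 : W 0 =ᵐ[μ] fun _ => w₀)
    (hstepeq : ∀ j < E, W (j + 1) =ᵐ[μ] fun ω => W j ω - η • hadamard m (G' j ω))
    (hvar : ∀ j < E, ∫ ω, ‖G' j ω - gradient Fn (W j ω)‖ ^ 2 ∂μ ≤ σ ^ 2)
    (horth : ∀ i j, i < E → j < E → i ≠ j →
      ∫ ω, (inner ℝ (hadamard m (G' i ω - gradient Fn (W i ω)))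
              (hadamard m (G' j ω - gradient Fn (W j ω))) : ℝ) ∂μ = 0)
    (hWint : ∀ j ≤ E, Integrable (fun ω => ‖W j ω‖ ^ 2) μ)
    (hGint : ∀ j ≤ E, Integrable (fun ω => ‖G' j ω‖ ^ 2) μ) :
    (1 / (E : ℝ)) * ∑ e ∈ Finset.Icc 1 E, ∫ ω, ‖W (e - 1) ω - w₀‖ ^ 2 ∂μ ≤
      4 * η ^ 2 * (E : ℝ) * σ ^ 2 + 16 * η ^ 2 * (E : ℝ) ^ 2 * δ ^ 2
        + 16 * η ^ 2 * (E : ℝ) ^ 2 * G := by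
  have hm_abs : ∀ i, |m i| ≤ 1 := fun i => by rcases hm i with h | h <;> simp [h]
  have hgrad : LipschitzWith L.toNNReal (gradient Fn) :=
    LipschitzWith.of_dist_le' fun w v => by simpa only [dist_eq_norm] using hlip w v
  have hWL2 : ∀ j ≤ E, MemLp (W j) 2 μ := fun j hj =>
    (memLp_two_iff_integrable_sq_norm (hWmeas j).aestronglyMeasurable).2 (hWint j hj)
  have hDL2 : ∀ j ≤ E, MemLp (fun ω => G' j ω - gradient Fn (W j ω)) 2 μ := fun j hj =>
    ((memLp_two_iff_integrable_sq_norm (hGmeas j).aestronglyMeasurable).2 (hGint j hj)).sub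
      (hgrad.comp_memLp_of_isFiniteMeasure (hWL2 j hj))
  have hnoise : ∀ j ≤ E,
      ∫ ω, ‖∑ k ∈ range j, hadamard m (G' k ω - gradient Fn (W k ω))‖ ^ 2 ∂μ ≤ j * σ ^ 2 :=
    fun j hj => by
      simpa using integral_norm_sum_sq_le_of_orthogonal (range j)
        (fun k hk => (hDL2 k (by grind)).hadamard hm_abs)
        (fun i hi k hk => horth i k (by grind) (by grind))
        fun k hk => (integral_norm_sq_hadamard_le hm_abs (hDL2 k (by grind))).trans (hvar k (by grind))
  have hb : ‖gradient Fn w₀‖ ^ 2 ≤ 2 * (δ ^ 2 + G) :=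
    (norm_sq_le_two_mul_norm_sub_sq_add _ (gradient F w₀)).trans (by gcongr; exact hhet w₀)
  set S : ℕ → ℝ := fun j => ∫ ω, ‖W j ω - w₀‖ ^ 2 ∂μ
  have hrec : ∀ j < E, S j ≤ (2 * η ^ 2 * E * σ ^ 2 + 8 * η ^ 2 * E ^ 2 * (δ ^ 2 + G))
      + 4 * η ^ 2 * E * L ^ 2 * ∑ k ∈ range j, S k := by
    intro j hj
    have hjE : (j : ℝ) ≤ E := by exact_mod_cast hj.le
    refine (integral_norm_sq_sub_le_of_ae_eq_sum_hadamard hm_abs hlip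
      (ae_eq_sub_smul_sum_range hW0 hstepeq j hj.le) (fun k hk => (hDL2 k (by omega)).hadamard hm_abs)
      fun k hk => hWL2 k (by omega)).trans ?_
    calc _ ≤ 2 * η ^ 2 * (E * σ ^ 2) + 4 * η ^ 2 * E * L ^ 2 * ∑ k ∈ range j, S k
          + 4 * η ^ 2 * E ^ 2 * (2 * (δ ^ 2 + G)) := by
          gcongr
          exact (hnoise j hj.le).trans (by gcongr)
      _ = _ := by ring
  have hT := sum_range_le_two_mul_of_le_add_mul_sum
    (fun j _ => integral_nonneg fun ω => by positivity) (by positivity) (by linarith) hrec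
  have hreindex : ∑ e ∈ Icc 1 E, S (e - 1) = ∑ k ∈ range E, S k := by
    rw [← Ico_add_one_right_eq_Icc, sum_Ico_eq_sum_range]
    simp
  have hG : 0 ≤ G := (sq_nonneg _).trans hw₀
  rw [hreindex, one_div_mul_eq_div]
  exact div_le_of_le_mul₀ (Nat.cast_nonneg _)
    (add_nonneg (by positivity) (mul_nonneg (by positivity) hG)) (hT.trans_eq (by ring))

/-- Paper's key Lemma (bounded client update): a client performing `E` local masked
SGD steps of size `η` from the received global model `w₀`, with `L`-smooth local loss
`Fn`, stochastic gradient variance at most `σ²`, data heterogeneity bounded by `δ`,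
and `‖∇F w₀‖² ≤ G`, satisfies, when `4η²L²E² ≤ 1/2`,
`(1/E) ∑_{e=1}^E E‖W (e−1) − w₀‖² ≤ 4η²Eσ² + 16η²E²δ² + 16η²E²G`. -/
theorem bounded_client_update
    (d E : ℕ) (hE : 1 ≤ E) (η L σ δ G : ℝ)
    (hη : 0 ≤ η) (hL : 0 < L) (hσ : 0 ≤ σ) (hδ : 0 ≤ δ) (hG : 0 ≤ G)
    (hstep : 4 * η ^ 2 * L ^ 2 * (E : ℝ) ^ 2 ≤ 1 / 2)
    {Ω : Type*} [MeasurableSpace Ω] (μ : Measure Ω) [IsProbabilityMeasure μ]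
    (m : Fin d → ℝ) (hm : ∀ i, m i = 0 ∨ m i = 1)
    (Fn F : EuclideanSpace ℝ (Fin d) → ℝ)
    (hFn : Differentiable ℝ Fn) (hF : Differentiable ℝ F)
    (hlip : ∀ w v, ‖gradient Fn w - gradient Fn v‖ ≤ L * ‖w - v‖)
    (hhet : ∀ w, ‖gradient Fn w - gradient F w‖ ≤ δ)
    (w₀ : EuclideanSpace ℝ (Fin d)) (hw₀ : ‖gradient F w₀‖ ^ 2 ≤ G)
    (W G' : ℕ → Ω → EuclideanSpace ℝ (Fin d))
    (hWmeas : ∀ j, StronglyMeasurable (W j))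
    (hGmeas : ∀ j, StronglyMeasurable (G' j))
    (hW0 : W 0 =ᵐ[μ] fun _ => w₀)
    (hstepeq : ∀ j < E, W (j + 1) =ᵐ[μ] fun ω => W j ω - η • hadamard m (G' j ω))
    (hvar : ∀ j < E, ∫ ω, ‖G' j ω - gradient Fn (W j ω)‖ ^ 2 ∂μ ≤ σ ^ 2)
    (horth : ∀ i j, i < E → j < E → i ≠ j →
      ∫ ω, (inner ℝ (hadamard m (G' i ω - gradient Fn (W i ω)))
              (hadamard m (G' j ω - gradient Fn (W j ω))) : ℝ) ∂μ = 0)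
    (hWint : ∀ j ≤ E, Integrable (fun ω => ‖W j ω‖ ^ 2) μ)
    (hGint : ∀ j ≤ E, Integrable (fun ω => ‖G' j ω‖ ^ 2) μ) :
    (1 / (E : ℝ)) * ∑ e ∈ Finset.Icc 1 E, ∫ ω, ‖W (e - 1) ω - w₀‖ ^ 2 ∂μ ≤
      4 * η ^ 2 * (E : ℝ) * σ ^ 2 + 16 * η ^ 2 * (E : ℝ) ^ 2 * δ ^ 2
        + 16 * η ^ 2 * (E : ℝ) ^ 2 * G :=
  bounded_client_update_general d E η L σ δ G hstep μ m hm Fn F hlip hhet w₀ hw₀ W G' hWmeas hGmeas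
    hW0 hstepeq hvar horth hWint hGint
end
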